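/- arXiv:2205.00963 — 4 statements merged into one kernel-verified Lean document; each statement's English description precedes it below -/
import Mathlib

section
/- Let m be a positive integer. The map from {i ∈ ℤ/2mℤ arising from odd i ∈ {1,3,...,2m-1}} × (ℤ/2mℤ) to (ℤ/2mℤ)² sending (i,j) ↦ (i+j-1, (i-1)/2 + j) (where (i-1)/2 is the integer quotient before reduction mod 2m) is injective; in particular its image has exactly 2m² elements. -/
/-!
Write `i = 2a + 1` with `a < m`. The map becomes `(a, j) ↦ (2a + j + 1, a + j + 1)`; the
difference of its two coordinates is `a` modulo `2m`, which determines `a < m`, and then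
the second coordinate determines `j < 2m`.
-/

namespace ZMod

theorem natCast_inj_of_lt {n a b : ℕ} (ha : a < n) (hb : b < n)
    (h : (a : ZMod n) = b) : a = b := by
  rwa [natCast_eq_natCast_iff', Nat.mod_eq_of_lt ha, Nat.mod_eq_of_lt hb] at h

theorem eq_of_natCast_two_mul_add_eq {n a a' j j' : ℕ} (ha : a < n) (ha' : a' < n)
    (hj : j < n) (hj' : j' < n)
    (h₁ : ((2 * a + j + 1 : ℕ) : ZMod n) = (2 * a' + j' + 1 : ℕ))
    (h₂ : ((a + j + 1 : ℕ) : ZMod n) = (a' + j' + 1 : ℕ)) :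
    a = a' ∧ j = j' := by
  push_cast at h₁ h₂
  have hdiff : (a : ZMod n) = a' := by linear_combination h₁ - h₂
  obtain rfl := natCast_inj_of_lt ha ha' hdiff
  exact ⟨rfl, natCast_inj_of_lt hj hj' (by linear_combination h₂)⟩

end ZMod

theorem stmt2_general (m : ℕ) :
    Function.Injective (fun p : Fin m × Fin (2 * m) =>
      ((((2 * (p.1 : ℕ) + 1) + ((p.2 : ℕ) + 1) - 1 : ℕ) : ZMod (2 * m)),
       ((((2 * (p.1 : ℕ) + 1) - 1) / 2 + ((p.2 : ℕ) + 1) : ℕ) : ZMod (2 * m)))) ∧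
    (Finset.univ.image (fun p : Fin m × Fin (2 * m) =>
      ((((2 * (p.1 : ℕ) + 1) + ((p.2 : ℕ) + 1) - 1 : ℕ) : ZMod (2 * m)),
       ((((2 * (p.1 : ℕ) + 1) - 1) / 2 + ((p.2 : ℕ) + 1) : ℕ) : ZMod (2 * m))))).card
      = 2 * m ^ 2 := by
  have hinj : Function.Injective (fun p : Fin m × Fin (2 * m) =>
      ((((2 * (p.1 : ℕ) + 1) + ((p.2 : ℕ) + 1) - 1 : ℕ) : ZMod (2 * m)),
       ((((2 * (p.1 : ℕ) + 1) - 1) / 2 + ((p.2 : ℕ) + 1) : ℕ) : ZMod (2 * m)))) := by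
    rintro ⟨a, j⟩ ⟨a', j'⟩ h
    have hfst (b k : ℕ) : 2 * b + 1 + (k + 1) - 1 = 2 * b + k + 1 := by omega
    have hsnd (b k : ℕ) : (2 * b + 1 - 1) / 2 + (k + 1) = b + k + 1 := by omega
    simp only [Prod.mk.injEq, hfst, hsnd] at h
    obtain ⟨ha, hj⟩ := ZMod.eq_of_natCast_two_mul_add_eq (by omega) (by omega)
      j.isLt j'.isLt h.1 h.2
    exact Prod.ext (Fin.ext ha) (Fin.ext hj)
  refine ⟨hinj, ?_⟩
  rw [Finset.card_image_of_injective _ hinj, Finset.card_univ, Fintype.card_prod,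
    Fintype.card_fin, Fintype.card_fin]
  ring

/-- For `m ≥ 1`, the map sending an odd `i ∈ {1,3,…,2m-1}` (written `i = 2a+1`) and
`j ∈ {1,…,2m}` to `(i+j-1 mod 2m, (i-1)/2 + j mod 2m)` is injective, so its image has
exactly `2m²` elements. -/
theorem stmt2 (m : ℕ) (hm : 0 < m) :
    Function.Injective (fun p : Fin m × Fin (2 * m) =>
      ((((2 * (p.1 : ℕ) + 1) + ((p.2 : ℕ) + 1) - 1 : ℕ) : ZMod (2 * m)),
       ((((2 * (p.1 : ℕ) + 1) - 1) / 2 + ((p.2 : ℕ) + 1) : ℕ) : ZMod (2 * m)))) ∧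
    (Finset.univ.image (fun p : Fin m × Fin (2 * m) =>
      ((((2 * (p.1 : ℕ) + 1) + ((p.2 : ℕ) + 1) - 1 : ℕ) : ZMod (2 * m)),
       ((((2 * (p.1 : ℕ) + 1) - 1) / 2 + ((p.2 : ℕ) + 1) : ℕ) : ZMod (2 * m))))).card
      = 2 * m ^ 2 :=
  stmt2_general m
end

section
/- Let I, J be homogeneous ideals of R = K[x1,...,xn] such that both R/I and R/J are Artinian Gorenstein graded algebras with socle degree d. If I_d = J_d (equality of degree-d graded components), then I = J. -/
open MvPolynomial

/-- `diffMon m f` is the result of applying the differential operator `∂^m` to `f`. -/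
noncomputable def diffMon {K σ : Type*} [CommSemiring K] (m : σ →₀ ℕ)
    (f : MvPolynomial σ K) : MvPolynomial σ K :=
  ∑ m' ∈ f.support,
    ((∏ i ∈ m.support, ((m' i).descFactorial (m i) : K)) * coeff m' f) •
      monomial (m' - m) (1 : K)

/-- `applyTo f g = g(∂₁,…,∂ₙ) f`, linear in `g`. -/
noncomputable def applyTo {K σ : Type*} [CommSemiring K] (f : MvPolynomial σ K) :
    MvPolynomial σ K →ₗ[K] MvPolynomial σ K :=
  Finsupp.lsum K (fun m => LinearMap.toSpanSingleton K (MvPolynomial σ K) (diffMon m f)) ∘ₗ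
    (AddMonoidAlgebra.coeffLinearEquiv K).toLinearMap

/-- The multidegree of an exponent vector `m` with respect to the coloring `c`. -/
def mdeg {σ : Type*} {d : ℕ} (c : σ → Fin d) (m : σ →₀ ℕ) (i : Fin d) : ℕ :=
  m.sum fun x k => if c x = i then k else 0

/-- The `ℤ^d`-graded component of the polynomial ring of multidegree `v`,
with respect to the coloring `c` of the variables. -/
noncomputable def componentSub (K : Type*) [CommSemiring K] {σ : Type*} {d : ℕ}
    (c : σ → Fin d) (v : Fin d → ℕ) : Submodule K (MvPolynomial σ K) :=
  Submodule.span K {p | ∃ m : σ →₀ ℕ, (∀ i, mdeg c m i = v i) ∧ p = monomial m (1 : K)}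

/-- `Hdim f S` is `H(f,S)`, the dimension of `{g(∂)f : g ∈ R_{e_S}}`. -/
noncomputable def Hdim {K : Type*} [Field K] {σ : Type*} {d : ℕ} (c : σ → Fin d)
    (f : MvPolynomial σ K) (S : Finset (Fin d)) : ℕ :=
  Module.finrank K ((componentSub K c (fun i => if i ∈ S then 1 else 0)).map (applyTo f))

/-- The degree-`t` graded component of `R/I` as a `K`-subspace. -/
noncomputable def quotComponent {K : Type*} [Field K] {n : ℕ}
    (I : Ideal (MvPolynomial (Fin n) K)) (t : ℕ) :
    Submodule K (MvPolynomial (Fin n) K ⧸ I) :=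
  (homogeneousSubmodule (Fin n) K t).map (Ideal.Quotient.mkₐ K I).toLinearMap

/-- `R/I` is an Artinian Gorenstein graded algebra of socle degree `d`: it is finite
dimensional, `(R/I)_d ≠ 0` is one-dimensional, and `0 :_{R/I} (x₁,…,xₙ) = (R/I)_d`. -/
def IsArtinianGorensteinSocle {K : Type*} [Field K] {n : ℕ}
    (I : Ideal (MvPolynomial (Fin n) K)) (d : ℕ) : Prop :=
  Module.Finite K (MvPolynomial (Fin n) K ⧸ I) ∧
  quotComponent I d ≠ ⊥ ∧
  Module.finrank K (quotComponent I d) = 1 ∧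
  ∀ a : MvPolynomial (Fin n) K ⧸ I,
    ((∀ i : Fin n, Ideal.Quotient.mk I (X i) * a = 0) ↔ a ∈ quotComponent I d)

/-!
Only one inclusion needs proof, and only the Gorenstein property of `R/J` enters it: a homogeneous
`g ∈ I` of degree `t` is shown to lie in `J` by downward induction on `t`. In degrees beyond the
top degree of the finite-dimensional algebra `R/J` every form lies in `J`; in degree `d` this is
the hypothesis `I_d ⊆ J_d`; in any other degree `t`, the products `xᵢ g ∈ I` lie in `J` by
induction, so the class of `g` is in the socle of `R/J`, which lives in degree `d ≠ t`.
-/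

section Homogeneous

variable {K σ : Type*} [Field K] {J : Ideal (MvPolynomial σ K)}

theorem mem_of_mk_eq_of_homogeneousComponent_eq_zero
    (hJhom : ∀ g ∈ J, ∀ t : ℕ, homogeneousComponent t g ∈ J)
    {t : ℕ} {g h : MvPolynomial σ K} (hg : g.IsHomogeneous t)
    (hgh : Ideal.Quotient.mk J g = Ideal.Quotient.mk J h) (hh : homogeneousComponent t h = 0) :
    g ∈ J := by
  have hmem := hJhom (g - h) (Ideal.Quotient.eq.mp hgh) t
  rwa [map_sub, hh, sub_zero, homogeneousComponent_eq_self hg] at hmem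

theorem exists_totalDegree_le_and_mk_eq [Module.Finite K (MvPolynomial σ K ⧸ J)] :
    ∃ T : ℕ, ∀ p : MvPolynomial σ K,
      ∃ q : MvPolynomial σ K, q.totalDegree ≤ T ∧ Ideal.Quotient.mk J p = Ideal.Quotient.mk J q := by
  let images : ℕ →o Submodule K (MvPolynomial σ K ⧸ J) :=
    ⟨fun T => (restrictTotalDegree σ K T).map (Ideal.Quotient.mkₐ K J).toLinearMap,
      fun _ _ hST => Submodule.map_mono fun _ hq =>
        (mem_restrictTotalDegree _ _ _).mpr (((mem_restrictTotalDegree _ _ _).mp hq).trans hST)⟩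
  obtain ⟨T, hT⟩ := monotone_stabilizes_iff_noetherian.mpr inferInstance images
  refine ⟨T, fun p => ?_⟩
  have hp : Ideal.Quotient.mk J p ∈ images (max T p.totalDegree) :=
    ⟨p, (mem_restrictTotalDegree _ _ _).mpr (le_max_right _ _), rfl⟩
  obtain ⟨q, hq, hqp⟩ := hT _ (le_max_left _ _) ▸ hp
  exact ⟨q, (mem_restrictTotalDegree _ _ _).mp hq, hqp.symm⟩

theorem exists_forall_isHomogeneous_mem [Module.Finite K (MvPolynomial σ K ⧸ J)]
    (hJhom : ∀ g ∈ J, ∀ t : ℕ, homogeneousComponent t g ∈ J) :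
    ∃ T : ℕ, ∀ t : ℕ, T ≤ t → ∀ g : MvPolynomial σ K, g.IsHomogeneous t → g ∈ J := by
  obtain ⟨T, hT⟩ := exists_totalDegree_le_and_mk_eq (J := J)
  refine ⟨T + 1, fun t ht g hg => ?_⟩
  obtain ⟨q, hq, hgq⟩ := hT g
  exact mem_of_mk_eq_of_homogeneousComponent_eq_zero hJhom hg hgq
    (homogeneousComponent_eq_zero _ _ (by omega))

end Homogeneous

section Socle

variable {K : Type*} [Field K] {n d : ℕ}

theorem mem_of_forall_X_mul_mem {J : Ideal (MvPolynomial (Fin n) K)}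
    (hJhom : ∀ g ∈ J, ∀ t : ℕ, homogeneousComponent t g ∈ J)
    (hsoc : ∀ a : MvPolynomial (Fin n) K ⧸ J,
      (∀ i, Ideal.Quotient.mk J (X i) * a = 0) → a ∈ quotComponent J d)
    {t : ℕ} (htd : t ≠ d) {g : MvPolynomial (Fin n) K} (hg : g.IsHomogeneous t)
    (hX : ∀ i, X i * g ∈ J) : g ∈ J := by
  obtain ⟨h, hh, hhg⟩ := hsoc (Ideal.Quotient.mk J g) fun i => by
    rw [← map_mul, Ideal.Quotient.eq_zero_iff_mem]
    exact hX i
  exact mem_of_mk_eq_of_homogeneousComponent_eq_zero hJhom hg hhg.symm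
    (by rw [homogeneousComponent_of_mem hh, if_neg htd])

theorem le_of_inf_homogeneousSubmodule_le {I J : Ideal (MvPolynomial (Fin n) K)}
    [Module.Finite K (MvPolynomial (Fin n) K ⧸ J)]
    (hIhom : ∀ g ∈ I, ∀ t : ℕ, homogeneousComponent t g ∈ I)
    (hJhom : ∀ g ∈ J, ∀ t : ℕ, homogeneousComponent t g ∈ J)
    (hsoc : ∀ a : MvPolynomial (Fin n) K ⧸ J,
      (∀ i, Ideal.Quotient.mk J (X i) * a = 0) → a ∈ quotComponent J d)
    (hd : Submodule.restrictScalars K I ⊓ homogeneousSubmodule (Fin n) K d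
        ≤ Submodule.restrictScalars K J ⊓ homogeneousSubmodule (Fin n) K d) :
    I ≤ J := by
  obtain ⟨T, hT⟩ := exists_forall_isHomogeneous_mem hJhom
  have hdeg : ∀ t, ∀ g : MvPolynomial (Fin n) K, g.IsHomogeneous t → g ∈ I → g ∈ J := by
    intro t
    rcases le_total T t with hTt | htT
    · exact fun g hg _ => hT t hTt g hg
    induction htT using Nat.decreasingInduction with
    | self => exact fun g hg _ => hT T le_rfl g hg
    | of_succ t _ ih =>
      intro g hg hgI
      rcases eq_or_ne t d with rfl | htd
      · exact (hd ⟨hgI, hg⟩).1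
      · refine mem_of_forall_X_mul_mem hJhom hsoc htd hg fun i => ?_
        exact ih _ (add_comm t 1 ▸ (isHomogeneous_X K i).mul hg) (I.mul_mem_left _ hgI)
  intro g hg
  rw [← sum_homogeneousComponent g]
  exact J.sum_mem fun t _ => hdeg t _ (homogeneousComponent_isHomogeneous t g) (hIhom g hg t)

end Socle

/-- If `I`, `J` are homogeneous ideals with `R/I` and `R/J` Artinian Gorenstein of socle
degree `d`, and `I_d = J_d`, then `I = J`. -/
theorem stmt10 (K : Type*) [Field K] (n d : ℕ)
    (I J : Ideal (MvPolynomial (Fin n) K))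
    (hIhom : ∀ g ∈ I, ∀ t : ℕ, homogeneousComponent t g ∈ I)
    (hJhom : ∀ g ∈ J, ∀ t : ℕ, homogeneousComponent t g ∈ J)
    (hI : IsArtinianGorensteinSocle I d) (hJ : IsArtinianGorensteinSocle J d)
    (hd : Submodule.restrictScalars K I ⊓ homogeneousSubmodule (Fin n) K d
        = Submodule.restrictScalars K J ⊓ homogeneousSubmodule (Fin n) K d) :
    I = J := by
  have := hI.1
  have := hJ.1
  exact le_antisymm
    (le_of_inf_homogeneousSubmodule_le hIhom hJhom (fun a => (hJ.2.2.2 a).1) hd.le)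
    (le_of_inf_homogeneousSubmodule_le hJhom hIhom (fun a => (hI.2.2.2 a).1) hd.ge)
end

section
/- Let f be a nonzero balanced polynomial of multidegree (1,...,1) in R = K[x_{ij}]. Then for any S ⊆ [d], H(f,S) = H(f,[d]∖S), where H(f,S) = dim_K {g(∂)f : g ∈ R_{e_S}}. -/
open MvPolynomial

/-!
For a square-free `f` of multidegree `v + v'`, the operator `g ↦ g(∂) f` sends the monomial `x^m`
of multidegree `v` to `∑ coeff (m + m') f • x^m'`, the sum running over the exponents `m'` of
multidegree `v'`. Hence `H` is the rank of the flattening matrix `(coeff (m' + m) f)_{m', m}`,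
and exchanging `v` and `v'` transposes that matrix.
-/

section Multidegree

variable {σ : Type*} {d : ℕ} (c : σ → Fin d)

lemma mdeg_eq_mapDomain (m : σ →₀ ℕ) (i : Fin d) : mdeg c m i = m.mapDomain c i := by
  simp [mdeg, Finsupp.mapDomain, Finsupp.sum_apply, Finsupp.single_apply]

lemma mdeg_add (m m' : σ →₀ ℕ) : mdeg c (m + m') = mdeg c m + mdeg c m' := by
  ext i
  simp only [mdeg_eq_mapDomain, Finsupp.mapDomain_add, Finsupp.add_apply, Pi.add_apply]

lemma le_mdeg (m : σ →₀ ℕ) (x : σ) : m x ≤ mdeg c m (c x) := by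
  classical
  conv_rhs => rw [← Finsupp.single_add_erase x m]
  rw [mdeg_eq_mapDomain, Finsupp.mapDomain_add, Finsupp.mapDomain_single]
  simp

def mdegSet (v : Fin d → ℕ) : Set (σ →₀ ℕ) := {m | mdeg c m = v}

lemma mdegSet_finite [Finite σ] (v : Fin d → ℕ) : (mdegSet c v).Finite := by
  classical
  refine (Set.finite_Iic (Finsupp.equivFunOnFinite.symm fun x => v (c x))).subset ?_
  intro m (hm : mdeg c m = v) x
  simpa [hm] using le_mdeg c m x

noncomputable instance [Finite σ] (v : Fin d → ℕ) : Fintype (mdegSet c v) :=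
  (mdegSet_finite c v).fintype

lemma componentSub_eq_restrictSupport (K : Type*) [CommSemiring K] (v : Fin d → ℕ) :
    componentSub K c v = restrictSupport K (mdegSet c v) := by
  rw [componentSub, restrictSupport_eq_span]
  congr 1
  ext p
  simp [mdegSet, funext_iff, eq_comm]

end Multidegree

section Differentiation

variable {K σ : Type*} [CommSemiring K]

lemma coeff_diffMon (m m' : σ →₀ ℕ) (f : MvPolynomial σ K) :
    coeff m' (diffMon m f) =
      (∏ x ∈ m.support, (((m + m') x).descFactorial (m x) : K)) * coeff (m + m') f := by
  classical
  rw [diffMon, coeff_sum]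
  simp only [coeff_smul, coeff_monomial, smul_eq_mul, mul_ite, mul_one, mul_zero]
  rw [Finset.sum_eq_single (m + m')]
  · simp
  · intro m'' _ hne
    split_ifs with h
    · have hlt : ¬ m ≤ m'' := fun hle => hne (by rw [← h, add_tsub_cancel_of_le hle])
      obtain ⟨x, hx⟩ : ∃ x, m'' x < m x := by simpa [Finsupp.le_def] using hlt
      have hx' : x ∈ m.support := Finsupp.mem_support_iff.mpr (by omega)
      rw [Finset.prod_eq_zero hx' (by simp [Nat.descFactorial_eq_zero_iff_lt.mpr hx]), zero_mul]
    · rfl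
  · intro h
    simp [notMem_support_iff.mp h]

lemma coeff_diffMon_of_le_one {f : MvPolynomial σ K} (hf : ∀ m ∈ f.support, ∀ x, m x ≤ 1)
    (m m' : σ →₀ ℕ) : coeff m' (diffMon m f) = coeff (m + m') f := by
  rw [coeff_diffMon]
  by_cases h : m + m' ∈ f.support
  · rw [Finset.prod_eq_one, one_mul]
    intro x hx
    have h1 := hf _ h x
    have h2 : m x ≠ 0 := Finsupp.mem_support_iff.mp hx
    rw [Finsupp.add_apply] at h1 ⊢
    rw [show m x = 1 by omega, show m' x = 0 by omega]
    simp
  · simp [notMem_support_iff.mp h]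

lemma applyTo_monomial_one (f : MvPolynomial σ K) (m : σ →₀ ℕ) :
    applyTo f (monomial m 1) = diffMon m f := by
  simp [applyTo, ← single_eq_monomial]

end Differentiation

section Flattening

variable {K σ : Type*} [Field K] {d : ℕ} {c : σ → Fin d}

noncomputable def flattening (f : MvPolynomial σ K) (A B : Set (σ →₀ ℕ)) : Matrix A B K :=
  fun a b => coeff (a.1 + b.1) f

lemma flattening_transpose (f : MvPolynomial σ K) (A B : Set (σ →₀ ℕ)) :
    (flattening f A B).transpose = flattening f B A := by
  ext b a
  simp [flattening, add_comm]

lemma basisRestrictSupport_apply (s : Set (σ →₀ ℕ)) (m : s) :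
    basisRestrictSupport K s m = ⟨monomial m 1, by simp⟩ := by
  classical
  rw [Module.Basis.apply_eq_iff]
  ext m'
  change coeff m' (monomial (m : σ →₀ ℕ) (1 : K)) = _
  simp [coeff_monomial, Finsupp.single_apply, Subtype.ext_iff]

variable {f : MvPolynomial σ K} {v v' : Fin d → ℕ}

lemma applyTo_mem_restrictSupport (hsq : ∀ m ∈ f.support, ∀ x, m x ≤ 1)
    (hf : f ∈ componentSub K c (v + v')) {g : MvPolynomial σ K}
    (hg : g ∈ componentSub K c v) : applyTo f g ∈ restrictSupport K (mdegSet c v') := by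
  suffices componentSub K c v ≤ (restrictSupport K (mdegSet c v')).comap (applyTo f) from this hg
  rw [componentSub, Submodule.span_le]
  rintro _ ⟨m, hm, rfl⟩
  rw [SetLike.mem_coe, Submodule.mem_comap, applyTo_monomial_one, mem_restrictSupport_iff]
  intro m' hm'
  rw [Finset.mem_coe, mem_support_iff, coeff_diffMon_of_le_one hsq] at hm'
  rw [componentSub_eq_restrictSupport, mem_restrictSupport_iff] at hf
  have hmm' : mdeg c (m + m') = v + v' := hf (mem_support_iff.mpr hm')
  rw [mdeg_add, show mdeg c m = v from funext hm] at hmm'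
  exact add_left_cancel hmm'

theorem finrank_map_applyTo_eq_rank_flattening [Finite σ]
    (hsq : ∀ m ∈ f.support, ∀ x, m x ≤ 1) (hf : f ∈ componentSub K c (v + v')) :
    Module.finrank K ((componentSub K c v).map (applyTo f)) =
      (flattening f (mdegSet c v') (mdegSet c v)).rank := by
  classical
  set C := restrictSupport K (mdegSet c v)
  set C' := restrictSupport K (mdegSet c v')
  let ψ : C →ₗ[K] C' := (applyTo f ∘ₗ C.subtype).codRestrict C' fun g =>
    applyTo_mem_restrictSupport hsq hf (by rw [componentSub_eq_restrictSupport]; exact g.2)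
  have hrange : (componentSub K c v).map (applyTo f) = ψ.range.map C'.subtype := by
    rw [← LinearMap.range_comp, LinearMap.subtype_comp_codRestrict, LinearMap.range_comp,
      Submodule.range_subtype, componentSub_eq_restrictSupport]
  have hmatrix : LinearMap.toMatrix (basisRestrictSupport K _) (basisRestrictSupport K _) ψ =
      flattening f (mdegSet c v') (mdegSet c v) := by
    ext m' m
    rw [LinearMap.toMatrix_apply, basisRestrictSupport_apply]
    change coeff m'.1 (applyTo f (monomial m.1 1)) = coeff (m'.1 + m.1) f
    rw [applyTo_monomial_one, coeff_diffMon_of_le_one hsq, add_comm]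
  rw [hrange, Submodule.finrank_map_subtype_eq, ← hmatrix, Matrix.rank_eq_finrank_range_toLin _
    (basisRestrictSupport K _) (basisRestrictSupport K _), Matrix.toLin_toMatrix]

theorem finrank_map_applyTo_comm [Finite σ]
    (hsq : ∀ m ∈ f.support, ∀ x, m x ≤ 1) (hf : f ∈ componentSub K c (v + v')) :
    Module.finrank K ((componentSub K c v).map (applyTo f)) =
      Module.finrank K ((componentSub K c v').map (applyTo f)) := by
  rw [finrank_map_applyTo_eq_rank_flattening hsq hf,
    finrank_map_applyTo_eq_rank_flattening hsq (add_comm v v' ▸ hf), ← flattening_transpose,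
    Matrix.rank_transpose]

end Flattening

theorem stmt12_general (K : Type*) [Field K] (d : ℕ) (n : Fin d → ℕ)
    (f : MvPolynomial (Σ i : Fin d, Fin (n i)) K)
    (hf : f ∈ componentSub K (Sigma.fst : (Σ i : Fin d, Fin (n i)) → Fin d) (fun _ => 1))
    (S : Finset (Fin d)) :
    Hdim Sigma.fst f S = Hdim Sigma.fst f Sᶜ := by
  have hsq : ∀ m ∈ f.support, ∀ x, m x ≤ 1 := by
    rw [componentSub_eq_restrictSupport, mem_restrictSupport_iff] at hf
    intro m hm x
    simpa [show mdeg Sigma.fst m = fun _ => 1 from hf hm] using le_mdeg Sigma.fst m x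
  have hsplit : (fun i => if i ∈ S then 1 else 0) + (fun i => if i ∈ Sᶜ then 1 else 0) =
      fun _ : Fin d => 1 := by
    funext i
    by_cases hi : i ∈ S <;> simp [hi]
  rw [← hsplit] at hf
  exact finrank_map_applyTo_comm hsq hf

/-- For a nonzero balanced polynomial `f` of multidegree `(1,…,1)`,
`H(f,S) = H(f,[d]∖S)`. -/
theorem stmt12 (K : Type*) [Field K] (d : ℕ) (n : Fin d → ℕ)
    (f : MvPolynomial (Σ i : Fin d, Fin (n i)) K) (hf0 : f ≠ 0)
    (hf : f ∈ componentSub K (Sigma.fst : (Σ i : Fin d, Fin (n i)) → Fin d) (fun _ => 1))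
    (S : Finset (Fin d)) :
    Hdim Sigma.fst f S = Hdim Sigma.fst f Sᶜ :=
  stmt12_general K d n f hf S
end

section
/- Let m ≥ 1, k = 2m, and consider the two maps from O × [k] to (ℤ/kℤ)², where O = {1,3,...,2m-1}, given by (i,j) ↦ (i+j-1 mod k, (i-1)/2 + j mod k) and (i,j) ↦ (i+j-1 mod k, (i-1)/2 + j + m mod k). Then both maps are injective, so each image has m·k elements, and the two images are disjoint. -/
private lemma aux_inj (m : ℕ) (hm : 0 < m) (c : ℕ) (a a' j j' : ℕ)
    (ha : a < m) (ha' : a' < m) (hj : j < 2 * m) (hj' : j' < 2 * m)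
    (h1 : ((2 * a + j + 1 : ℕ) : ZMod (2 * m)) = ((2 * a' + j' + 1 : ℕ) : ZMod (2 * m)))
    (h2 : ((a + j + 1 + c : ℕ) : ZMod (2 * m)) = ((a' + j' + 1 + c : ℕ) : ZMod (2 * m))) :
    a = a' ∧ j = j' := by
  push_cast at h1 h2
  have hA : ((a : ℕ) : ZMod (2 * m)) = ((a' : ℕ) : ZMod (2 * m)) := by
    push_cast; linear_combination h1 - h2
  have hA' : a % (2 * m) = a' % (2 * m) := (ZMod.natCast_eq_natCast_iff _ _ _).1 hA
  rw [Nat.mod_eq_of_lt (by omega), Nat.mod_eq_of_lt (by omega)] at hA'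
  have hJ : ((j : ℕ) : ZMod (2 * m)) = ((j' : ℕ) : ZMod (2 * m)) := by
    push_cast; subst hA'; linear_combination h2
  have hJ' : j % (2 * m) = j' % (2 * m) := (ZMod.natCast_eq_natCast_iff _ _ _).1 hJ
  rw [Nat.mod_eq_of_lt hj, Nat.mod_eq_of_lt hj'] at hJ'
  exact ⟨hA', hJ'⟩

private lemma aux_disj (m : ℕ) (hm : 0 < m) (a a' j j' : ℕ)
    (ha : a < m) (ha' : a' < m) (hj : j < 2 * m) (hj' : j' < 2 * m)
    (h1 : ((2 * a + j + 1 : ℕ) : ZMod (2 * m)) = ((2 * a' + j' + 1 : ℕ) : ZMod (2 * m)))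
    (h2 : ((a + j + 1 : ℕ) : ZMod (2 * m)) = ((a' + j' + 1 + m : ℕ) : ZMod (2 * m))) :
    False := by
  have hz : ((2 * m : ℕ) : ZMod (2 * m)) = 0 := ZMod.natCast_self _
  push_cast at h1 h2 hz
  have hA : ((a + m : ℕ) : ZMod (2 * m)) = ((a' + 2 * m : ℕ) : ZMod (2 * m)) := by
    push_cast; linear_combination h1 - h2 - hz
  have hA' : (a + m) % (2 * m) = (a' + 2 * m) % (2 * m) :=
    (ZMod.natCast_eq_natCast_iff _ _ _).1 hA
  rw [Nat.mod_eq_of_lt (by omega), Nat.add_mod_right, Nat.mod_eq_of_lt (by omega)] at hA'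
  omega

/-- For `m ≥ 1` and `k = 2m`, the two maps `(i,j) ↦ (i+j-1, (i-1)/2+j)` and
`(i,j) ↦ (i+j-1, (i-1)/2+j+m)` (with `i = 2a+1` odd in `{1,…,2m-1}`, `j ∈ {1,…,2m}`,
values in `ℤ/2mℤ`) are injective with disjoint images, each of cardinality `m·2m`. -/
theorem stmt19 (m : ℕ) (hm : 0 < m) :
    Function.Injective (fun p : Fin m × Fin (2 * m) =>
      ((((2 * (p.1 : ℕ) + 1) + ((p.2 : ℕ) + 1) - 1 : ℕ) : ZMod (2 * m)),
       ((((2 * (p.1 : ℕ) + 1) - 1) / 2 + ((p.2 : ℕ) + 1) : ℕ) : ZMod (2 * m)))) ∧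
    Function.Injective (fun p : Fin m × Fin (2 * m) =>
      ((((2 * (p.1 : ℕ) + 1) + ((p.2 : ℕ) + 1) - 1 : ℕ) : ZMod (2 * m)),
       ((((2 * (p.1 : ℕ) + 1) - 1) / 2 + ((p.2 : ℕ) + 1) + m : ℕ) : ZMod (2 * m)))) ∧
    Disjoint
      (Finset.univ.image (fun p : Fin m × Fin (2 * m) =>
        ((((2 * (p.1 : ℕ) + 1) + ((p.2 : ℕ) + 1) - 1 : ℕ) : ZMod (2 * m)),
         ((((2 * (p.1 : ℕ) + 1) - 1) / 2 + ((p.2 : ℕ) + 1) : ℕ) : ZMod (2 * m)))))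
      (Finset.univ.image (fun p : Fin m × Fin (2 * m) =>
        ((((2 * (p.1 : ℕ) + 1) + ((p.2 : ℕ) + 1) - 1 : ℕ) : ZMod (2 * m)),
         ((((2 * (p.1 : ℕ) + 1) - 1) / 2 + ((p.2 : ℕ) + 1) + m : ℕ) : ZMod (2 * m))))) ∧
    (Finset.univ.image (fun p : Fin m × Fin (2 * m) =>
      ((((2 * (p.1 : ℕ) + 1) + ((p.2 : ℕ) + 1) - 1 : ℕ) : ZMod (2 * m)),
       ((((2 * (p.1 : ℕ) + 1) - 1) / 2 + ((p.2 : ℕ) + 1) : ℕ) : ZMod (2 * m))))).card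
      = m * (2 * m) ∧
    (Finset.univ.image (fun p : Fin m × Fin (2 * m) =>
      ((((2 * (p.1 : ℕ) + 1) + ((p.2 : ℕ) + 1) - 1 : ℕ) : ZMod (2 * m)),
       ((((2 * (p.1 : ℕ) + 1) - 1) / 2 + ((p.2 : ℕ) + 1) + m : ℕ) : ZMod (2 * m))))).card
      = m * (2 * m) := by
  have key : ∀ a j : ℕ, (2 * a + 1) + (j + 1) - 1 = 2 * a + j + 1 := by intros; omega
  have key2 : ∀ a : ℕ, ((2 * a + 1) - 1) / 2 = a := by intros; omega
  have inj1 : Function.Injective (fun p : Fin m × Fin (2 * m) =>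
      ((((2 * (p.1 : ℕ) + 1) + ((p.2 : ℕ) + 1) - 1 : ℕ) : ZMod (2 * m)),
       ((((2 * (p.1 : ℕ) + 1) - 1) / 2 + ((p.2 : ℕ) + 1) : ℕ) : ZMod (2 * m)))) := by
    rintro ⟨a, j⟩ ⟨a', j'⟩ h
    simp only [Prod.mk.injEq, key, key2] at h
    obtain ⟨e1, e2⟩ := aux_inj m hm 0 a a' j j' a.2 a'.2 j.2 j'.2
      (by rw [show 2 * (a:ℕ) + j + 1 = 2 * (a:ℕ) + ((j:ℕ)+1) from by omega,
              show 2 * (a':ℕ) + j' + 1 = 2 * (a':ℕ) + ((j':ℕ)+1) from by omega]; exact h.1)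
      (by rw [show (a:ℕ) + j + 1 + 0 = (a:ℕ) + ((j:ℕ)+1) from by omega,
              show (a':ℕ) + j' + 1 + 0 = (a':ℕ) + ((j':ℕ)+1) from by omega]; exact h.2)
    exact Prod.ext (Fin.ext e1) (Fin.ext e2)
  have inj2 : Function.Injective (fun p : Fin m × Fin (2 * m) =>
      ((((2 * (p.1 : ℕ) + 1) + ((p.2 : ℕ) + 1) - 1 : ℕ) : ZMod (2 * m)),
       ((((2 * (p.1 : ℕ) + 1) - 1) / 2 + ((p.2 : ℕ) + 1) + m : ℕ) : ZMod (2 * m)))) := by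
    rintro ⟨a, j⟩ ⟨a', j'⟩ h
    simp only [Prod.mk.injEq, key, key2] at h
    obtain ⟨e1, e2⟩ := aux_inj m hm m a a' j j' a.2 a'.2 j.2 j'.2
      (by rw [show 2 * (a:ℕ) + j + 1 = 2 * (a:ℕ) + ((j:ℕ)+1) from by omega,
              show 2 * (a':ℕ) + j' + 1 = 2 * (a':ℕ) + ((j':ℕ)+1) from by omega]; exact h.1)
      (by rw [show (a:ℕ) + j + 1 + m = (a:ℕ) + ((j:ℕ)+1) + m from by omega,
              show (a':ℕ) + j' + 1 + m = (a':ℕ) + ((j':ℕ)+1) + m from by omega]; exact h.2)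
    exact Prod.ext (Fin.ext e1) (Fin.ext e2)
  refine ⟨inj1, inj2, ?_, ?_, ?_⟩
  · rw [Finset.disjoint_left]
    rintro ⟨x, y⟩ hx hy
    simp only [Finset.mem_image, Finset.mem_univ, true_and, Prod.mk.injEq] at hx hy
    obtain ⟨⟨a, j⟩, hp1, hp2⟩ := hx
    obtain ⟨⟨a', j'⟩, hq1, hq2⟩ := hy
    simp only [key, key2] at hp1 hp2 hq1 hq2
    refine aux_disj m hm a a' j j' a.2 a'.2 j.2 j'.2 ?_ ?_
    · rw [hp1, hq1]
    · rw [show (a:ℕ) + j + 1 = (a:ℕ) + ((j:ℕ)+1) from by omega,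
          show (a':ℕ) + j' + 1 + m = (a':ℕ) + ((j':ℕ)+1) + m from by omega, hp2, hq2]
  · rw [Finset.card_image_of_injective _ inj1, Finset.card_univ]
    simp [Fintype.card_prod]
  · rw [Finset.card_image_of_injective _ inj2, Finset.card_univ]
    simp [Fintype.card_prod]
end
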